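/- If (a, b, c, d, e, f) are the six edge lengths of a non-degenerate tetrahedron with a, c, e emanating from a common vertex and b, d, f the respectively opposite connecting edges (b joining endpoints of a and c; d joining endpoints of a and e; f joining endpoints of c and e), then (a, b, c, √(2(a²+e²)−d²), e, √(2(c²+e²)−f²)) are also the edge lengths of a valid tetrahedron. -/
import Mathlib


/-- Euclidean distance between two points of ℝ³. -/
noncomputable def dist3 (u v : Fin 3 → ℝ) : ℝ :=
  Real.sqrt ((u 0 - v 0) ^ 2 + (u 1 - v 1) ^ 2 + (u 2 - v 2) ^ 2)

/-- `(a, b, c, d, e, f)` are the six edge lengths of a (non-degenerate)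
tetrahedron: `a, c, e` emanate from a common vertex `v₁` (towards `v₂`, `v₃`,
`v₄` respectively), `b` joins the endpoints of `a` and `c`, `d` joins the
endpoints of `a` and `e`, and `f` joins the endpoints of `c` and `e`; the
non-degeneracy is the linear independence of the spanning vectors. -/
def IsTetrahedron (a b c d e f : ℝ) : Prop :=
  ∃ v₁ v₂ v₃ v₄ : Fin 3 → ℝ,
    LinearIndependent ℝ ![v₂ - v₁, v₃ - v₁, v₄ - v₁] ∧
    dist3 v₁ v₂ = a ∧ dist3 v₂ v₃ = b ∧ dist3 v₁ v₃ = c ∧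
    dist3 v₂ v₄ = d ∧ dist3 v₁ v₄ = e ∧ dist3 v₃ v₄ = f

lemma dist3_sq (u v : Fin 3 → ℝ) :
    dist3 u v ^ 2 = (u 0 - v 0) ^ 2 + (u 1 - v 1) ^ 2 + (u 2 - v 2) ^ 2 := by
  unfold dist3
  exact Real.sq_sqrt (by positivity)

/-- Replacing the diagonals `d` and `f` of a tetrahedron by the complementary
parallelogram diagonals `√(2(a²+e²)−d²)` and `√(2(c²+e²)−f²)` again yields the
edge lengths of a valid tetrahedron. -/
theorem tetrahedron_complementary_diagonals (a b c d e f : ℝ)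
    (h : IsTetrahedron a b c d e f) :
    IsTetrahedron a b c (Real.sqrt (2 * (a ^ 2 + e ^ 2) - d ^ 2)) e
      (Real.sqrt (2 * (c ^ 2 + e ^ 2) - f ^ 2)) := by
  obtain ⟨v₁, v₂, v₃, v₄, hli, ha, hb, hc, hd, he, hf⟩ := h
  refine ⟨v₁, v₂, v₃, (2 : ℝ) • v₁ - v₄, ?_, ha, hb, hc, ?_, ?_, ?_⟩
  · have heq : ![v₂ - v₁, v₃ - v₁, (2 : ℝ) • v₁ - v₄ - v₁]
        = (![1, 1, -1] : Fin 3 → ℝˣ) • ![v₂ - v₁, v₃ - v₁, v₄ - v₁] := by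
      funext i
      fin_cases i <;>
        simp [Pi.smul_apply', funext_iff, Pi.smul_apply, smul_sub, two_smul] <;>
        intro j <;> ring
    rw [heq]
    exact hli.units_smul _
  · unfold dist3
    congr 1
    have h1 := dist3_sq v₁ v₂
    have h2 := dist3_sq v₁ v₄
    have h3 := dist3_sq v₂ v₄
    rw [ha] at h1; rw [he] at h2; rw [hd] at h3
    simp only [Pi.sub_apply, Pi.smul_apply, smul_eq_mul]
    rw [h1, h2, h3]; ring
  · unfold dist3
    rw [← he]
    unfold dist3
    congr 1
    simp only [Pi.sub_apply, Pi.smul_apply, smul_eq_mul]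
    ring
  · unfold dist3
    congr 1
    have h1 := dist3_sq v₁ v₃
    have h2 := dist3_sq v₁ v₄
    have h3 := dist3_sq v₃ v₄
    rw [hc] at h1; rw [he] at h2; rw [hf] at h3
    simp only [Pi.sub_apply, Pi.smul_apply, smul_eq_mul]
    rw [h1, h2, h3]; ring
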